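/- For vectors u, v ∈ ℝ² with ‖u‖ < 1 and ‖v‖ ≤ 1, the Einstein–Poincaré relativistic sum u ⊕ v := (1/(1 + u·v))·{ u + (1/γ)·v + (γ/(1+γ))·(u·v)·u }, with γ = 1/√(1 − ‖u‖²), satisfies ‖u ⊕ v‖ ≤ 1; moreover ‖u ⊕ v‖ < 1 whenever ‖v‖ < 1, and ‖u ⊕ v‖ = 1 whenever ‖v‖ = 1. Hence the relativistic sum maps the closed unit disk to itself. -/

import Mathlib

/-!
With `b = ⟪u, v⟫` and `β = √(1 - ‖u‖²) = 1/γ`, the sum is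
`(1 + b)⁻¹ • ((1 + b/(1+β)) • u + β • v)`, and expanding the square norm with `‖u‖² = 1 - β²`
gives the Lorentz-factor identity
`1 - ‖u ⊕ v‖² = (1 - ‖u‖²)(1 - ‖v‖²) / (1 + b)²`.
So `1 - ‖u ⊕ v‖²` is a positive multiple of `1 - ‖v‖²` and has the same sign.
-/

open RealInnerProductSpace

/-- The Einstein–Poincaré relativistic sum `u ⊕ v` of two vectors of the plane, for
`‖u‖ < 1`. -/
noncomputable def relSum (u v : EuclideanSpace ℝ (Fin 2)) : EuclideanSpace ℝ (Fin 2) :=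
  (1 / (1 + ⟪u, v⟫)) •
    (u + (1 / (1 / Real.sqrt (1 - ‖u‖ ^ 2))) • v +
      (((1 / Real.sqrt (1 - ‖u‖ ^ 2)) / (1 + 1 / Real.sqrt (1 - ‖u‖ ^ 2))) * ⟪u, v⟫) • u)

section InnerProductSpace

variable {F : Type*} [SeminormedAddCommGroup F] [InnerProductSpace ℝ F]

lemma one_add_inner_pos {u v : F} (hu : ‖u‖ < 1) (hv : ‖v‖ ≤ 1) : 0 < 1 + ⟪u, v⟫ := by
  have huv : ‖u‖ * ‖v‖ < 1 := (mul_le_of_le_one_right (norm_nonneg u) hv).trans_lt hu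
  linarith [neg_le_of_abs_le (abs_real_inner_le_norm u v)]

lemma norm_sq_smul_add_smul_eq {u v : F} {β : ℝ} (hβ : β ^ 2 = 1 - ‖u‖ ^ 2) (hβ₁ : 1 + β ≠ 0) :
    ‖(1 + ⟪u, v⟫ / (1 + β)) • u + β • v‖ ^ 2 =
      (1 + ⟪u, v⟫) ^ 2 - (1 - ‖u‖ ^ 2) * (1 - ‖v‖ ^ 2) := by
  rw [norm_add_sq_real, norm_smul, norm_smul, real_inner_smul_left, real_inner_smul_right,
    mul_pow, mul_pow, Real.norm_eq_abs, Real.norm_eq_abs, sq_abs, sq_abs,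
    show ‖u‖ ^ 2 = 1 - β ^ 2 by linarith]
  field_simp
  ring

end InnerProductSpace

lemma relSum_eq_smul {u : EuclideanSpace ℝ (Fin 2)} (hu : ‖u‖ < 1) (v : EuclideanSpace ℝ (Fin 2)) :
    relSum u v = (1 + ⟪u, v⟫)⁻¹ •
      ((1 + ⟪u, v⟫ / (1 + √(1 - ‖u‖ ^ 2))) • u + √(1 - ‖u‖ ^ 2) • v) := by
  have hβ : 0 < √(1 - ‖u‖ ^ 2) := Real.sqrt_pos.2 (by nlinarith [norm_nonneg u])
  rw [relSum, one_div]
  congr 1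
  match_scalars
  · field_simp
    ring
  · field_simp

lemma one_sub_norm_relSum_sq {u v : EuclideanSpace ℝ (Fin 2)} (hu : ‖u‖ < 1)
    (huv : 1 + ⟪u, v⟫ ≠ 0) :
    1 - ‖relSum u v‖ ^ 2 = (1 - ‖u‖ ^ 2) * (1 - ‖v‖ ^ 2) / (1 + ⟪u, v⟫) ^ 2 := by
  have hu' : 0 ≤ 1 - ‖u‖ ^ 2 := by nlinarith [norm_nonneg u]
  have hβ₁ : 1 + √(1 - ‖u‖ ^ 2) ≠ 0 := by positivity
  rw [relSum_eq_smul hu, norm_smul, mul_pow, norm_sq_smul_add_smul_eq (Real.sq_sqrt hu') hβ₁,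
    norm_inv, Real.norm_eq_abs, inv_pow, sq_abs]
  field_simp
  ring

/-- For `‖u‖ < 1` and `‖v‖ ≤ 1`, the relativistic sum satisfies `‖u ⊕ v‖ ≤ 1`; moreover
`‖u ⊕ v‖ < 1` whenever `‖v‖ < 1` and `‖u ⊕ v‖ = 1` whenever `‖v‖ = 1`: the relativistic
sum maps the closed unit disk to itself. -/
theorem relSum_mem_closedUnitDisk (u v : EuclideanSpace ℝ (Fin 2))
    (hu : ‖u‖ < 1) (hv : ‖v‖ ≤ 1) :
    ‖relSum u v‖ ≤ 1 ∧ (‖v‖ < 1 → ‖relSum u v‖ < 1) ∧ (‖v‖ = 1 → ‖relSum u v‖ = 1) := by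
  have huv := one_add_inner_pos hu hv
  set c := (1 - ‖u‖ ^ 2) / (1 + ⟪u, v⟫) ^ 2
  have hc : 0 < c := div_pos (by nlinarith [norm_nonneg u]) (by positivity)
  have hnorm : 1 - ‖relSum u v‖ ^ 2 = c * (1 - ‖v‖ ^ 2) := by
    rw [one_sub_norm_relSum_sq hu huv.ne']
    ring
  have hw := norm_nonneg (relSum u v)
  refine ⟨?_, fun hv₁ ↦ ?_, fun hv₁ ↦ ?_⟩
  · have : ‖v‖ ^ 2 ≤ 1 := (sq_le_one_iff₀ (norm_nonneg v)).2 hv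
    exact (sq_le_one_iff₀ hw).1 (by nlinarith)
  · have : ‖v‖ ^ 2 < 1 := (sq_lt_one_iff₀ (norm_nonneg v)).2 hv₁
    exact (sq_lt_one_iff₀ hw).1 (by nlinarith)
  · refine (pow_eq_one_iff_of_nonneg hw two_ne_zero).1 ?_
    rw [hv₁] at hnorm
    linarith
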